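/- arXiv:math/0011162 — 3 statements merged into one kernel-verified Lean document; each statement's English description precedes it below -/
import Mathlib

section
/- Let A be the Weyl algebra over ℂ with generators p, q and relation [p,q] = ℏ·1 (ℏ ∈ ℂ nonzero), and let W₁ = A/Aq, W₂ = A/Ap be the left A-modules obtained by quotienting by the left ideals generated by q and p respectively. Then Ext⁰_A(W₁, W₂) = Hom_A(W₁, W₂) = 0 and Ext¹_A(W₁, W₂) ≅ ℂ. -/
/-- The defining relation of the Weyl algebra: `p*q = q*p + ℏ`. -/
inductive WeylRel (ℏ : ℂ) : FreeAlgebra ℂ (Fin 2) → FreeAlgebra ℂ (Fin 2) → Prop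
  | comm : WeylRel ℏ (FreeAlgebra.ι ℂ 0 * FreeAlgebra.ι ℂ 1)
      (FreeAlgebra.ι ℂ 1 * FreeAlgebra.ι ℂ 0 + algebraMap ℂ (FreeAlgebra ℂ (Fin 2)) ℏ)

/-- The Weyl algebra `A` with generators `p, q` and relation `[p,q] = ℏ`. -/
abbrev WeylAlgebra (ℏ : ℂ) := RingQuot (WeylRel ℏ)

/-- The generator `p` of the Weyl algebra. -/
noncomputable def Wp (ℏ : ℂ) : WeylAlgebra ℏ :=
  RingQuot.mkAlgHom ℂ (WeylRel ℏ) (FreeAlgebra.ι ℂ 0)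

/-- The generator `q` of the Weyl algebra. -/
noncomputable def Wq (ℏ : ℂ) : WeylAlgebra ℏ :=
  RingQuot.mkAlgHom ℂ (WeylRel ℏ) (FreeAlgebra.ι ℂ 1)

/-- The left module `W₁ = A/Aq`. -/
abbrev WeylW₁ (ℏ : ℂ) := WeylAlgebra ℏ ⧸ (Ideal.span {Wq ℏ} : Ideal (WeylAlgebra ℏ))

/-- The left module `W₂ = A/Ap`. -/
abbrev WeylW₂ (ℏ : ℂ) := WeylAlgebra ℏ ⧸ (Ideal.span {Wp ℏ} : Ideal (WeylAlgebra ℏ))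

open Polynomial

namespace WeylAux

noncomputable def Dmap (ℏ : ℂ) : Module.End ℂ (Polynomial ℂ) :=
  ℏ • (Polynomial.derivative : Polynomial ℂ →ₗ[ℂ] Polynomial ℂ)

noncomputable def Xmap : Module.End ℂ (Polynomial ℂ) := LinearMap.mulLeft ℂ (X : Polynomial ℂ)

noncomputable def ρ₀ (ℏ : ℂ) : FreeAlgebra ℂ (Fin 2) →ₐ[ℂ] Module.End ℂ (Polynomial ℂ) :=
  FreeAlgebra.lift ℂ ![Dmap ℏ, Xmap]

theorem hrel (ℏ : ℂ) {x y : FreeAlgebra ℂ (Fin 2)} (h : WeylRel ℏ x y) : ρ₀ ℏ x = ρ₀ ℏ y := by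
  cases h
  simp only [ρ₀, map_mul, map_add, FreeAlgebra.lift_ι_apply, Matrix.cons_val_zero,
    Matrix.cons_val_one, Matrix.head_cons, AlgHom.commutes]
  refine LinearMap.ext fun f => ?_
  simp only [Dmap, Xmap, Module.End.mul_apply, LinearMap.add_apply, LinearMap.smul_apply,
    LinearMap.mulLeft_apply, Module.algebraMap_end_apply]
  rw [derivative_mul, derivative_X]
  simp [smul_add, mul_smul_comm]
  ring_nf

noncomputable def ρ (ℏ : ℂ) : WeylAlgebra ℏ →ₐ[ℂ] Module.End ℂ (Polynomial ℂ) :=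
  RingQuot.liftAlgHom ℂ ⟨ρ₀ ℏ, @fun x y h => hrel ℏ h⟩

theorem rho_p (ℏ : ℂ) : ρ ℏ (Wp ℏ) = Dmap ℏ := by
  simp [ρ, Wp, RingQuot.liftAlgHom_mkAlgHom_apply, ρ₀, FreeAlgebra.lift_ι_apply]

theorem rho_q (ℏ : ℂ) : ρ ℏ (Wq ℏ) = Xmap := by
  simp [ρ, Wq, RingQuot.liftAlgHom_mkAlgHom_apply, ρ₀, FreeAlgebra.lift_ι_apply]

noncomputable instance polyMod (ℏ : ℂ) : Module (WeylAlgebra ℏ) (Polynomial ℂ) :=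
  Module.compHom _ (ρ ℏ).toRingHom

theorem smul_def (ℏ : ℂ) (a : WeylAlgebra ℏ) (f : Polynomial ℂ) : a • f = ρ ℏ a f := rfl

instance (ℏ : ℂ) : IsScalarTower ℂ (WeylAlgebra ℏ) (Polynomial ℂ) :=
  ⟨fun c a f => by rw [smul_def, map_smul, LinearMap.smul_apply, smul_def]⟩

end WeylAux

namespace WeylAux
open Polynomial

theorem pq_comm (ℏ : ℂ) :
    Wp ℏ * Wq ℏ = Wq ℏ * Wp ℏ + algebraMap ℂ (WeylAlgebra ℏ) ℏ := by
  have h := RingQuot.mkAlgHom_rel ℂ (WeylRel.comm (ℏ := ℏ))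
  simpa only [map_mul, map_add, AlgHom.commutes, Wp, Wq] using h

theorem pqpow (ℏ : ℂ) : ∀ n : ℕ,
    Wp ℏ * Wq ℏ ^ n = Wq ℏ ^ n * Wp ℏ + (n : ℂ) • (ℏ • Wq ℏ ^ (n - 1))
  | 0 => by simp
  | (n + 1) => by
    have ih := pqpow ℏ n
    have h1 : Wp ℏ * Wq ℏ ^ (n + 1) = (Wp ℏ * Wq ℏ) * Wq ℏ ^ n := by
      rw [pow_succ', ← mul_assoc]
    rw [h1, pq_comm ℏ, add_mul, mul_assoc, ih]
    have h2 : algebraMap ℂ (WeylAlgebra ℏ) ℏ * Wq ℏ ^ n = ℏ • Wq ℏ ^ n := by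
      rw [Algebra.smul_def]
    rw [h2, mul_add, ← mul_assoc, ← pow_succ']
    have h3 : Wq ℏ * ((n : ℂ) • (ℏ • Wq ℏ ^ (n - 1))) = (n : ℂ) • (ℏ • (Wq ℏ * Wq ℏ ^ (n - 1))) := by
      rw [mul_smul_comm, mul_smul_comm]
    rw [h3]
    cases n with
    | zero => simp
    | succ m =>
      have h4 : Wq ℏ * Wq ℏ ^ (m + 1 - 1) = Wq ℏ ^ (m + 1) := by
        simp [pow_succ']
      rw [h4]
      have h5 : ((m + 1 + 1 : ℕ) : ℂ) = ((m + 1 : ℕ) : ℂ) + 1 := by push_cast; ring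
      rw [h5, add_smul, one_smul]
      abel

theorem pcomm (ℏ : ℂ) (f : Polynomial ℂ) :
    Wp ℏ * aeval (Wq ℏ) f =
      aeval (Wq ℏ) f * Wp ℏ + ℏ • aeval (Wq ℏ) (derivative f) := by
  induction f using Polynomial.induction_on' with
  | add p q hp hq =>
    simp only [map_add, mul_add, add_mul, hp, hq, smul_add]
    abel
  | monomial n a =>
    rw [aeval_monomial, derivative_monomial, aeval_monomial, ← Algebra.smul_def, ← Algebra.smul_def,
      mul_smul_comm, smul_mul_assoc, pqpow ℏ n, smul_add]
    congr 1
    rw [smul_smul, smul_smul, smul_smul]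
    rw [show a * (n : ℂ) * ℏ = ℏ * (a * (n : ℂ)) by ring]
end WeylAux

namespace WeylAux
open Polynomial

variable (ℏ : ℂ)

noncomputable def mk₂ : WeylAlgebra ℏ →ₗ[WeylAlgebra ℏ] (WeylAlgebra ℏ ⧸ (Ideal.span {Wp ℏ} : Ideal (WeylAlgebra ℏ))) :=
  (Ideal.span {Wp ℏ} : Ideal (WeylAlgebra ℏ)).mkQ

theorem mk₂_csmul (r : ℂ) (a : WeylAlgebra ℏ) : mk₂ ℏ (r • a) = r • mk₂ ℏ a :=
  Submodule.Quotient.mk_smul _ r a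

theorem mk₂_asmul (a b : WeylAlgebra ℏ) : mk₂ ℏ (a * b) = a • mk₂ ℏ b :=
  map_smul (mk₂ ℏ) a b

theorem ker_le : (Ideal.span {Wp ℏ} : Ideal (WeylAlgebra ℏ)) ≤
    LinearMap.ker (LinearMap.toSpanSingleton (WeylAlgebra ℏ) (Polynomial ℂ) 1) := by
  rw [Ideal.span_le]
  intro x hx
  rw [Set.mem_singleton_iff] at hx
  subst hx
  simp only [SetLike.mem_coe, LinearMap.mem_ker, LinearMap.toSpanSingleton_apply]
  rw [smul_def, rho_p]
  simp [Dmap]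

noncomputable def φ : (WeylAlgebra ℏ ⧸ (Ideal.span {Wp ℏ} : Ideal (WeylAlgebra ℏ))) →ₗ[WeylAlgebra ℏ] Polynomial ℂ :=
  (Ideal.span {Wp ℏ} : Ideal (WeylAlgebra ℏ)).liftQ
    (LinearMap.toSpanSingleton (WeylAlgebra ℏ) (Polynomial ℂ) 1) (ker_le ℏ)

theorem φ_mk (a : WeylAlgebra ℏ) : φ ℏ (mk₂ ℏ a) = a • (1 : Polynomial ℂ) := rfl

theorem asmul (a : WeylAlgebra ℏ) (f : Polynomial ℂ) :
    mk₂ ℏ (aeval (Wq ℏ) (a • f)) = a • mk₂ ℏ (aeval (Wq ℏ) f) := by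
  obtain ⟨x, rfl⟩ := RingQuot.mkAlgHom_surjective ℂ (WeylRel ℏ) a
  induction x using FreeAlgebra.induction generalizing f with
  | grade0 r =>
    rw [AlgHom.commutes, algebraMap_smul, map_smul, mk₂_csmul, algebraMap_smul]
  | grade1 i =>
    fin_cases i
    · -- p
      show mk₂ ℏ (aeval (Wq ℏ) (Wp ℏ • f)) = Wp ℏ • mk₂ ℏ (aeval (Wq ℏ) f)
      rw [smul_def, rho_p]
      have h1 : Dmap ℏ f = ℏ • derivative f := rfl
      rw [h1, map_smul, mk₂_csmul, ← mk₂_asmul]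
      rw [eq_comm, ← sub_eq_zero, ← mk₂_csmul, ← map_sub, mk₂, Submodule.mkQ_apply,
        Submodule.Quotient.mk_eq_zero]
      have h2 : Wp ℏ * aeval (Wq ℏ) f - ℏ • aeval (Wq ℏ) (derivative f)
          = aeval (Wq ℏ) f * Wp ℏ := by rw [pcomm ℏ f]; abel
      rw [h2]
      exact Submodule.mem_span_singleton.mpr ⟨aeval (Wq ℏ) f, rfl⟩
    · -- q
      show mk₂ ℏ (aeval (Wq ℏ) (Wq ℏ • f)) = Wq ℏ • mk₂ ℏ (aeval (Wq ℏ) f)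
      rw [smul_def, rho_q]
      have h1 : Xmap f = X * f := rfl
      rw [h1, map_mul, aeval_X, mk₂_asmul]
  | mul x y hx hy =>
    rw [map_mul, mul_smul, hx, hy, mul_smul]
  | add x y hx hy =>
    simp only [map_add, add_smul, hx, hy]
end WeylAux

namespace WeylAux
open Polynomial

variable (ℏ : ℂ)

theorem qpow_smul_one (n : ℕ) : (Wq ℏ ^ n) • (1 : Polynomial ℂ) = X ^ n := by
  induction n with
  | zero => simp
  | succ n ih =>
    rw [pow_succ', mul_smul, ih, smul_def, rho_q]
    show X * X ^ n = X ^ (n + 1)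
    rw [pow_succ']

theorem aeval_smul_one (f : Polynomial ℂ) : (aeval (Wq ℏ) f) • (1 : Polynomial ℂ) = f := by
  induction f using Polynomial.induction_on' with
  | add p q hp hq => rw [map_add, add_smul, hp, hq]
  | monomial n a =>
    rw [aeval_monomial, ← Algebra.smul_def, smul_assoc, qpow_smul_one]
    rw [← C_mul_X_pow_eq_monomial, smul_eq_C_mul]

theorem psi_phi (x : WeylAlgebra ℏ ⧸ (Ideal.span {Wp ℏ} : Ideal (WeylAlgebra ℏ))) :
    mk₂ ℏ (aeval (Wq ℏ) (φ ℏ x)) = x := by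
  obtain ⟨a, rfl⟩ := Submodule.Quotient.mk_surjective _ x
  have h1 : (Submodule.Quotient.mk a : WeylAlgebra ℏ ⧸ (Ideal.span {Wp ℏ} : Ideal (WeylAlgebra ℏ))) = mk₂ ℏ a := rfl
  rw [h1, φ_mk, asmul, map_one, ← mk₂_asmul, mul_one]
end WeylAux

open WeylAux in
/-- For the Weyl algebra `A` with `[p,q] = ℏ ≠ 0` and the modules `W₁ = A/Aq`,
`W₂ = A/Ap`: `Ext⁰(W₁,W₂) = Hom_A(W₁,W₂) = 0`, and `Ext¹(W₁,W₂) ≅ ℂ`.  (Using the free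
resolution `0 → A →(·q) A → W₁ → 0`, the group `Ext¹(W₁,W₂)` is the cokernel of
multiplication by `q` on `W₂`.) -/
theorem weyl_ext_groups (ℏ : ℂ) (hℏ : ℏ ≠ 0) :
    (∀ f : WeylW₁ ℏ →ₗ[WeylAlgebra ℏ] WeylW₂ ℏ, f = 0) ∧
    Nonempty ((WeylW₂ ℏ ⧸
        Submodule.span ℂ {w : WeylW₂ ℏ | ∃ v : WeylW₂ ℏ, w = Wq ℏ • v}) ≃ₗ[ℂ] ℂ) := by
  constructor
  · intro f
    set x := f (Submodule.Quotient.mk 1) with hx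
    have h0 : (Wq ℏ • (Submodule.Quotient.mk (1 : WeylAlgebra ℏ) : WeylW₁ ℏ)) = 0 := by
      have h0' : Wq ℏ • (Submodule.Quotient.mk (1 : WeylAlgebra ℏ) : WeylW₁ ℏ)
          = Submodule.Quotient.mk (Wq ℏ • (1 : WeylAlgebra ℏ)) :=
        (Submodule.Quotient.mk_smul _ _ _).symm
      rw [h0', smul_eq_mul, mul_one, Submodule.Quotient.mk_eq_zero]
      exact Submodule.mem_span_singleton_self _
    have hq : Wq ℏ • x = 0 := by
      rw [hx, ← map_smul, h0, map_zero]
    have hφ : φ ℏ x = 0 := by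
      have h1 : φ ℏ (Wq ℏ • x) = Wq ℏ • φ ℏ x := map_smul _ _ _
      rw [hq, map_zero] at h1
      rw [smul_def, rho_q] at h1
      have h2 : X * φ ℏ x = 0 := h1.symm
      rcases mul_eq_zero.mp h2 with h | h
      · exact absurd h X_ne_zero
      · exact h
    have hx0 : x = 0 := by rw [← psi_phi ℏ x, hφ, map_zero, map_zero]
    refine LinearMap.ext fun y => ?_
    obtain ⟨a, rfl⟩ := Submodule.Quotient.mk_surjective _ y
    have h3 : (Submodule.Quotient.mk a : WeylW₁ ℏ) = a • Submodule.Quotient.mk 1 := by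
      rw [← Submodule.Quotient.mk_smul, smul_eq_mul, mul_one]
    rw [h3, map_smul, ← hx, hx0, smul_zero, LinearMap.zero_apply]
  · -- Ext¹ ≅ ℂ
    set S : Submodule ℂ (WeylW₂ ℏ) :=
      Submodule.span ℂ {w : WeylW₂ ℏ | ∃ v : WeylW₂ ℏ, w = Wq ℏ • v} with hS
    let ev : WeylW₂ ℏ →ₗ[ℂ] ℂ := (lcoeff ℂ 0) ∘ₗ ((φ ℏ).restrictScalars ℂ)
    have hev : ∀ y : WeylW₂ ℏ, ev y = (φ ℏ y).coeff 0 := fun y => rfl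
    have hker : S ≤ LinearMap.ker ev := by
      rw [hS, Submodule.span_le]
      rintro w ⟨v, rfl⟩
      simp only [SetLike.mem_coe, LinearMap.mem_ker, hev]
      rw [map_smul, smul_def, rho_q]
      have hX : Xmap (φ ℏ v) = X * φ ℏ v := rfl
      rw [hX, mul_coeff_zero, coeff_X_zero, zero_mul]
    let e : (WeylW₂ ℏ ⧸ S) →ₗ[ℂ] ℂ := S.liftQ ev hker
    have he : ∀ y : WeylW₂ ℏ, e (S.mkQ y) = ev y := fun y => rfl
    have hev1 : ev (mk₂ ℏ 1) = 1 := by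
      rw [hev, φ_mk, one_smul, coeff_one_zero]
    have hsurj : Function.Surjective e := by
      intro c
      refine ⟨S.mkQ (c • mk₂ ℏ 1), ?_⟩
      rw [he, map_smul, hev1, smul_eq_mul, mul_one]
    have hinj : Function.Injective e := by
      rw [← LinearMap.ker_eq_bot, eq_bot_iff]
      intro y hy
      obtain ⟨z, rfl⟩ := Submodule.Quotient.mk_surjective S y
      have hz : ev z = 0 := hy
      rw [hev] at hz
      obtain ⟨g, hg⟩ := (X_dvd_iff).mpr hz
      have hz2 : z = Wq ℏ • mk₂ ℏ (aeval (Wq ℏ) g) := by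
        conv_lhs => rw [← psi_phi ℏ z]
        rw [hg, map_mul, aeval_X, mk₂_asmul]
      have hmem : z ∈ S := by
        rw [hS]
        exact Submodule.subset_span ⟨mk₂ ℏ (aeval (Wq ℏ) g), hz2⟩
      rw [Submodule.mem_bot, Submodule.Quotient.mk_eq_zero]
      exact hmem
    exact ⟨LinearEquiv.ofBijective e ⟨hinj, hsurj⟩⟩
end

section
/- The Dedekind sum function s(p,q), defined for coprime integers p, q and normalized by s(1,1) = 0 (or an equivalent normalization), satisfying s(p+nq, q) = s(p,q), s(-p,q) = -s(p,q), and the reciprocity law s(p,q) + s(q,p) = (p² + q² + 1 - 3pq)/(12pq), is uniquely determined by these properties. -/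
/-!
The difference `d = s₁ - s₂` of two solutions is periodic in its first argument and satisfies
`d p q + d q p = 0`, with `d 1 1 = 0`. Reducing `p` modulo `q` and swapping the arguments runs
the Euclidean algorithm on `(p, q)`, so strong induction on `q` shows `d p q = 0`.
-/

theorem IsCoprime.emod_left {p q : ℤ} (h : IsCoprime p q) : IsCoprime (p % q) q := by
  simpa [Int.emod_def, sub_eq_add_neg] using h.add_mul_left_left (-(p / q))

section Euclid

variable {G : Type*} {d : ℤ → ℤ → G}

theorem apply_emod_left_of_periodic
    (hper : ∀ p q n : ℤ, IsCoprime p q → 0 < q → d (p + n * q) q = d p q)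
    {p q : ℤ} (hpq : IsCoprime p q) (hq : 0 < q) : d p q = d (p % q) q := by
  have h := hper (p % q) q (p / q) hpq.emod_left hq
  rwa [Int.emod_add_ediv_mul] at h

theorem eq_zero_of_periodic_of_add_swap_eq_zero [AddZeroClass G]
    (hper : ∀ p q n : ℤ, IsCoprime p q → 0 < q → d (p + n * q) q = d p q)
    (hswap : ∀ p q : ℤ, IsCoprime p q → 0 < p → 0 < q → d p q + d q p = 0)
    (hone : d 1 1 = 0) {p q : ℤ} (hpq : IsCoprime p q) (hq : 0 < q) : d p q = 0 := by
  lift q to ℕ using hq.le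
  induction q using Nat.strong_induction_on generalizing p with
  | _ q ih =>
    rw [apply_emod_left_of_periodic hper hpq hq]
    have hr : IsCoprime (p % q) q := hpq.emod_left
    rcases (Int.emod_nonneg p hq.ne').eq_or_lt with hr0 | hrpos
    · have hq1 : (q : ℤ) = 1 := by
        rw [← hr0, isCoprime_zero_left, Int.isUnit_iff] at hr
        omega
      have h := hper 0 1 1 isCoprime_one_right one_pos
      rw [zero_add, one_mul, hone] at h
      rw [← hr0, hq1, h]
    · have hrq : p % q < q := Int.emod_lt_of_pos p hq
      lift p % q to ℕ using hrpos.le with r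
      have h := hswap _ _ hr hrpos hq
      rwa [ih r (by omega) hr.symm (by omega), add_zero] at h

end Euclid

theorem dedekind_sum_unique_general (s₁ s₂ : ℤ → ℤ → ℚ)
    (h₁per : ∀ p q n : ℤ, IsCoprime p q → 0 < q → s₁ (p + n * q) q = s₁ p q)
    (h₁rec : ∀ p q : ℤ, IsCoprime p q → 0 < p → 0 < q →
        s₁ p q + s₁ q p = ((q ^ 2 + p ^ 2 + 1 - 3 * p * q : ℤ) : ℚ) / ((12 * p * q : ℤ) : ℚ))
    (h₁norm : s₁ 1 1 = 0)
    (h₂per : ∀ p q n : ℤ, IsCoprime p q → 0 < q → s₂ (p + n * q) q = s₂ p q)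
    (h₂rec : ∀ p q : ℤ, IsCoprime p q → 0 < p → 0 < q →
        s₂ p q + s₂ q p = ((q ^ 2 + p ^ 2 + 1 - 3 * p * q : ℤ) : ℚ) / ((12 * p * q : ℤ) : ℚ))
    (h₂norm : s₂ 1 1 = 0) :
    ∀ p q : ℤ, IsCoprime p q → 0 < q → s₁ p q = s₂ p q := by
  intro p q hpq hq
  rw [← sub_eq_zero]
  refine eq_zero_of_periodic_of_add_swap_eq_zero (d := s₁ - s₂) ?_ ?_ ?_ hpq hq
  · intro p q n hpq hq
    simp only [Pi.sub_apply, h₁per p q n hpq hq, h₂per p q n hpq hq]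
  · intro p q hpq hp hq
    simp only [Pi.sub_apply]
    linear_combination h₁rec p q hpq hp hq - h₂rec p q hpq hp hq
  · simp [h₁norm, h₂norm]

/-- The Dedekind sum function `s(p,q)`, defined for coprime integers `p, q` with `q > 0`,
normalized by `s(1,1) = 0`, and satisfying periodicity `s(p+nq,q) = s(p,q)`, oddness
`s(-p,q) = -s(p,q)`, and the reciprocity law
`s(p,q) + s(q,p) = (q² + p² + 1 - 3pq)/(12pq)`, is uniquely determined by these
properties: any two such functions agree on coprime pairs. -/
theorem dedekind_sum_unique (s₁ s₂ : ℤ → ℤ → ℚ)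
    (h₁per : ∀ p q n : ℤ, IsCoprime p q → 0 < q → s₁ (p + n * q) q = s₁ p q)
    (h₁odd : ∀ p q : ℤ, IsCoprime p q → 0 < q → s₁ (-p) q = - s₁ p q)
    (h₁rec : ∀ p q : ℤ, IsCoprime p q → 0 < p → 0 < q →
        s₁ p q + s₁ q p = ((q ^ 2 + p ^ 2 + 1 - 3 * p * q : ℤ) : ℚ) / ((12 * p * q : ℤ) : ℚ))
    (h₁norm : s₁ 1 1 = 0)
    (h₂per : ∀ p q n : ℤ, IsCoprime p q → 0 < q → s₂ (p + n * q) q = s₂ p q)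
    (h₂odd : ∀ p q : ℤ, IsCoprime p q → 0 < q → s₂ (-p) q = - s₂ p q)
    (h₂rec : ∀ p q : ℤ, IsCoprime p q → 0 < p → 0 < q →
        s₂ p q + s₂ q p = ((q ^ 2 + p ^ 2 + 1 - 3 * p * q : ℤ) : ℚ) / ((12 * p * q : ℤ) : ℚ))
    (h₂norm : s₂ 1 1 = 0) :
    ∀ p q : ℤ, IsCoprime p q → 0 < q → s₁ p q = s₂ p q :=
  dedekind_sum_unique_general s₁ s₂ h₁per h₁rec h₁norm h₂per h₂rec h₂norm
end

section
/- Let q ∈ ℂ with q not a root of unity, and let B be the ℂ-algebra generated by x±1, y±1 with xy = qyx. Every algebra automorphism σ of B maps x to λ·xᵃyᵇ and y to μ·xᶜyᵈ for some λ, μ ∈ ℂˣ and integers a,b,c,d with ad - bc = 1. -/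
/-- The defining relations of the algebraic quantum torus with generators
`x = ι 0`, `x⁻¹ = ι 1`, `y = ι 2`, `y⁻¹ = ι 3` and relation `x*y = q·(y*x)`. -/
inductive QTRel (q : ℂ) : FreeAlgebra ℂ (Fin 4) → FreeAlgebra ℂ (Fin 4) → Prop
  | xinv : QTRel q (FreeAlgebra.ι ℂ 0 * FreeAlgebra.ι ℂ 1) 1
  | xinv' : QTRel q (FreeAlgebra.ι ℂ 1 * FreeAlgebra.ι ℂ 0) 1
  | yinv : QTRel q (FreeAlgebra.ι ℂ 2 * FreeAlgebra.ι ℂ 3) 1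
  | yinv' : QTRel q (FreeAlgebra.ι ℂ 3 * FreeAlgebra.ι ℂ 2) 1
  | comm : QTRel q (FreeAlgebra.ι ℂ 0 * FreeAlgebra.ι ℂ 2)
      (q • (FreeAlgebra.ι ℂ 2 * FreeAlgebra.ι ℂ 0))

/-- The quantum torus `B = ℂ⟨x^{±1}, y^{±1}⟩/(xy = q·yx)`. -/
abbrev QTorus (q : ℂ) := RingQuot (QTRel q)

/-- The invertible generator `x` of the quantum torus. -/
noncomputable def QTx (q : ℂ) : (QTorus q)ˣ where
  val := RingQuot.mkAlgHom ℂ (QTRel q) (FreeAlgebra.ι ℂ 0)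
  inv := RingQuot.mkAlgHom ℂ (QTRel q) (FreeAlgebra.ι ℂ 1)
  val_inv := by
    simpa [map_mul, map_one] using RingQuot.mkAlgHom_rel ℂ (QTRel.xinv (q := q))
  inv_val := by
    simpa [map_mul, map_one] using RingQuot.mkAlgHom_rel ℂ (QTRel.xinv' (q := q))

/-- The invertible generator `y` of the quantum torus. -/
noncomputable def QTy (q : ℂ) : (QTorus q)ˣ where
  val := RingQuot.mkAlgHom ℂ (QTRel q) (FreeAlgebra.ι ℂ 2)
  inv := RingQuot.mkAlgHom ℂ (QTRel q) (FreeAlgebra.ι ℂ 3)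
  val_inv := by
    simpa [map_mul, map_one] using RingQuot.mkAlgHom_rel ℂ (QTRel.yinv (q := q))
  inv_val := by
    simpa [map_mul, map_one] using RingQuot.mkAlgHom_rel ℂ (QTRel.yinv' (q := q))

/-!
The quantum torus embeds in the twisted group algebra of `ℤ × ℤ`, the finitely supported functions
with `e_a * e_b = q ^ (-a₂ b₁) • e_(a + b)`, by `x ↦ e_(1,0)`, `y ↦ e_(0,1)`; a left inverse is
`e_v ↦ x ^ v₁ * y ^ v₂`. Units of the model are monomials: if `f * g = 1` and `f` has two terms,
then since `ℤ × ℤ` has two unique sums, two distinct pairs of support points have sums reached in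
only one way, so `f * g` has at least two terms. Hence `σ x = λ x^a y^b` and `σ y = μ x^c y^d`, and
comparing coefficients in `σ x σ y = q σ y σ x` gives `q ^ (ad - bc - 1) = 1`. For `q = 0` the
relation makes the unit `xy` vanish, so the algebra is zero.
-/

open Finsupp

noncomputable section

section TwistedMul

variable {G k : Type*} [CommSemiring k]

def twistedMul [Add G] (t : G → G → k) : (G →₀ k) →ₗ[k] (G →₀ k) →ₗ[k] G →₀ k :=
  linearCombination k fun a ↦ linearCombination k fun b ↦ single (a + b) (t a b)

variable {t : G → G → k}

theorem twistedMul_single_single [Add G] (a b : G) (r s : k) :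
    twistedMul t (single a r) (single b s) = single (a + b) (t a b * r * s) := by
  simp only [twistedMul, linearCombination_single, LinearMap.smul_apply, smul_single, smul_eq_mul]
  ring_nf

theorem twistedMul_eq_sum [Add G] (f g : G →₀ k) :
    twistedMul t f g =
      ∑ p ∈ f.support ×ˢ g.support, single (p.1 + p.2) (t p.1 p.2 * f p.1 * g p.2) := by
  rw [Finset.sum_product]
  conv_lhs => rw [← f.sum_single, ← g.sum_single]
  simp only [Finsupp.sum, map_sum, LinearMap.sum_apply, twistedMul_single_single]
  exact Finset.sum_comm

theorem twistedMul_apply_add_of_uniqueAdd [Add G] {f g : G →₀ k} {a₀ b₀ : G}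
    (h : UniqueAdd f.support g.support a₀ b₀) :
    twistedMul t f g (a₀ + b₀) = t a₀ b₀ * f a₀ * g b₀ := by
  classical
  rw [twistedMul_eq_sum, finsetSum_apply]
  refine (Finset.sum_eq_single (a₀, b₀) ?_ ?_).trans single_eq_same <;>
    simp_rw [Finset.mem_product]
  · exact fun p hp hne ↦ single_eq_of_ne fun he ↦ hne (Prod.ext_iff.mpr (h hp.1 hp.2 he.symm))
  · intro hnotMem
    rcases not_and_or.mp hnotMem with ha | hb
    · rw [notMem_support_iff.mp ha, mul_zero, zero_mul, single_zero, coe_zero, Pi.zero_apply]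
    · rw [notMem_support_iff.mp hb, mul_zero, single_zero, coe_zero, Pi.zero_apply]

theorem exists_eq_single_of_twistedMul_eq_single [Add G] [NoZeroDivisors k] [TwoUniqueSums G]
    (ht : ∀ a b, t a b ≠ 0) {f g : G →₀ k} {c : G} {r : k} (hr : r ≠ 0)
    (h : twistedMul t f g = single c r) : ∃ a s, s ≠ 0 ∧ f = single a s := by
  have hf : f.support.Nonempty := by
    rw [support_nonempty_iff]; rintro rfl; simp only [map_zero, LinearMap.zero_apply] at h
    exact hr (single_eq_zero.mp h.symm)
  have hg : g.support.Nonempty := by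
    rw [support_nonempty_iff]; rintro rfl; simp only [map_zero] at h
    exact hr (single_eq_zero.mp h.symm)
  have hsum : ∀ a ∈ f.support, ∀ b ∈ g.support,
      UniqueAdd f.support g.support a b → a + b = c := by
    intro a ha b hb hab
    have hne : twistedMul t f g (a + b) ≠ 0 := by
      rw [twistedMul_apply_add_of_uniqueAdd hab]
      exact mul_ne_zero (mul_ne_zero (ht a b) (mem_support_iff.mp ha)) (mem_support_iff.mp hb)
    rw [h] at hne
    by_contra hc
    exact hne (single_eq_of_ne hc)
  suffices f.support.card = 1 by
    obtain ⟨a, ha, hfa⟩ := card_support_eq_one.mp this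
    exact ⟨a, f a, ha, hfa⟩
  by_contra hcard
  obtain ⟨p₁, hp₁, p₂, hp₂, hne, hu₁, hu₂⟩ := TwoUniqueSums.uniqueAdd_of_one_lt_card
    (Nat.one_lt_mul_iff.mpr ⟨hf.card_pos, hg.card_pos, Or.inl (by have := hf.card_pos; omega)⟩)
  rw [Finset.mem_product] at hp₁ hp₂
  have hsame := hu₁ hp₂.1 hp₂.2 ((hsum _ hp₂.1 _ hp₂.2 hu₂).trans (hsum _ hp₁.1 _ hp₁.2 hu₁).symm)
  exact hne (Prod.ext hsame.1 hsame.2).symm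

theorem twistedMul_assoc [AddSemigroup G]
    (ht : ∀ a b c, t a b * t (a + b) c = t b c * t a (b + c)) (f g h : G →₀ k) :
    twistedMul t (twistedMul t f g) h = twistedMul t f (twistedMul t g h) := by
  induction f using Finsupp.induction_linear with
  | zero => simp
  | add f₁ f₂ h₁ h₂ => simp only [map_add, LinearMap.add_apply, h₁, h₂]
  | single a r =>
  induction g using Finsupp.induction_linear with
  | zero => simp
  | add g₁ g₂ h₁ h₂ => simp only [map_add, LinearMap.add_apply, h₁, h₂]
  | single b s =>
  induction h using Finsupp.induction_linear with
  | zero => simp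
  | add h₁ h₂ ih₁ ih₂ => simp only [map_add, ih₁, ih₂]
  | single c p =>
    simp only [twistedMul_single_single, add_assoc]
    congr 1
    calc t (a + b) c * (t a b * r * s) * p = t a b * t (a + b) c * (r * s * p) := by ring
      _ = t a (b + c) * r * (t b c * s * p) := by rw [ht]; ring

theorem single_zero_one_twistedMul [AddZeroClass G] (ht : ∀ a, t 0 a = 1) (f : G →₀ k) :
    twistedMul t (single 0 1) f = f := by
  induction f using Finsupp.induction_linear with
  | zero => simp
  | add f₁ f₂ h₁ h₂ => simp only [map_add, h₁, h₂]
  | single a r => rw [twistedMul_single_single, zero_add, ht, one_mul, one_mul]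

theorem twistedMul_single_zero_one [AddZeroClass G] (ht : ∀ a, t a 0 = 1) (f : G →₀ k) :
    twistedMul t f (single 0 1) = f := by
  induction f using Finsupp.induction_linear with
  | zero => simp
  | add f₁ f₂ h₁ h₂ => simp only [map_add, LinearMap.add_apply, h₁, h₂]
  | single a r => rw [twistedMul_single_single, add_zero, ht, one_mul, mul_one]

theorem linearCombination_twistedMul [Add G] {A : Type*} [Semiring A] [Algebra k A] {v : G → A}
    (hv : ∀ a b, v a * v b = t a b • v (a + b)) (f g : G →₀ k) :
    linearCombination k v (twistedMul t f g) =
      linearCombination k v f * linearCombination k v g := by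
  induction f using Finsupp.induction_linear with
  | zero => simp
  | add f₁ f₂ h₁ h₂ => simp only [map_add, LinearMap.add_apply, h₁, h₂, add_mul]
  | single a r =>
  induction g using Finsupp.induction_linear with
  | zero => simp
  | add g₁ g₂ h₁ h₂ => simp only [map_add, h₁, h₂, mul_add]
  | single b s =>
    simp only [twistedMul_single_single, linearCombination_single, smul_mul_smul_comm, hv,
      smul_smul]
    ring_nf

end TwistedMul

theorem zpow_mul_zpow_eq_of_mul_eq {G : Type*} [Group G] {s x y : G} (hsx : Commute s x)
    (hsy : Commute s y) (h : x * y = s * (y * x)) (m n : ℤ) :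
    y ^ n * x ^ m = s ^ (-(m * n)) * (x ^ m * y ^ n) := by
  have hx : SemiconjBy x y (s * y) := by rw [SemiconjBy, h, mul_assoc]
  have hxn : x * y ^ n = s ^ n * (y ^ n * x) := by
    rw [(hx.zpow_right n).eq, hsy.mul_zpow, mul_assoc]
  have hyn : SemiconjBy (y ^ n) x (s ^ (-n) * x) := by
    rw [SemiconjBy, mul_assoc, hxn, zpow_neg, inv_mul_cancel_left]
  rw [(hyn.zpow_right m).eq, (hsx.zpow_left (-n)).mul_zpow, ← zpow_mul, mul_assoc, neg_mul,
    mul_comm n]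

def twist (u : ℂˣ) (a b : ℤ × ℤ) : ℂ := ↑(u ^ (-(a.2 * b.1)))

theorem twist_cocycle (u : ℂˣ) (a b c : ℤ × ℤ) :
    twist u a b * twist u (a + b) c = twist u b c * twist u a (b + c) := by
  simp only [twist, ← Units.val_mul, ← zpow_add, Prod.fst_add, Prod.snd_add]
  ring_nf

/-- A type synonym, so that the pointwise product on `Finsupp` is not in the way. -/
def QTModel (_u : ℂˣ) : Type := (ℤ × ℤ) →₀ ℂ

namespace QTModel

variable {u : ℂˣ}

instance : AddCommGroup (QTModel u) := inferInstanceAs (AddCommGroup ((ℤ × ℤ) →₀ ℂ))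

instance : Module ℂ (QTModel u) := inferInstanceAs (Module ℂ ((ℤ × ℤ) →₀ ℂ))

instance : Ring (QTModel u) :=
  { (inferInstance : AddCommGroup (QTModel u)) with
    mul := fun f g ↦ twistedMul (twist u) f g
    one := single 0 1
    left_distrib := fun f ↦ map_add (twistedMul (twist u) f)
    right_distrib := fun f g ↦ LinearMap.map_add₂ (twistedMul (twist u)) f g
    zero_mul := LinearMap.map_zero₂ (twistedMul (twist u))
    mul_zero := fun f ↦ map_zero (twistedMul (twist u) f)
    mul_assoc := twistedMul_assoc (twist_cocycle u)
    one_mul := single_zero_one_twistedMul fun a ↦ by simp [twist]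
    mul_one := twistedMul_single_zero_one fun a ↦ by simp [twist] }

instance : Algebra ℂ (QTModel u) :=
  Algebra.ofModule (fun c f g ↦ LinearMap.map_smul₂ (twistedMul (twist u)) c f g)
    fun c f g ↦ map_smul (twistedMul (twist u) f) c g

def monomial (v : ℤ × ℤ) (c : ℂ) : QTModel u := single v c

theorem monomial_mul_monomial (a b : ℤ × ℤ) (r s : ℂ) :
    (monomial a r : QTModel u) * monomial b s = monomial (a + b) (twist u a b * r * s) :=
  twistedMul_single_single a b r s

theorem smul_monomial (c : ℂ) (v : ℤ × ℤ) (r : ℂ) :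
    c • (monomial v r : QTModel u) = monomial v (c * r) :=
  smul_single c v r

theorem one_def : (1 : QTModel u) = monomial 0 1 := rfl

instance : Nontrivial (QTModel u) := inferInstanceAs (Nontrivial ((ℤ × ℤ) →₀ ℂ))

theorem exists_eq_monomial_of_isUnit {f : QTModel u} (hf : IsUnit f) :
    ∃ v c, c ≠ 0 ∧ f = monomial v c := by
  obtain ⟨g, hg⟩ := hf.exists_right_inv
  exact exists_eq_single_of_twistedMul_eq_single (fun _ _ ↦ Units.ne_zero _) one_ne_zero hg

theorem det_eq_one_of_monomial_commutation (hu : ¬IsOfFinOrder u) {v w : ℤ × ℤ} {r s : ℂ}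
    (hr : r ≠ 0) (hs : s ≠ 0)
    (h : monomial v r * monomial w s = (u : ℂ) • (monomial w s * monomial v r : QTModel u)) :
    v.1 * w.2 - v.2 * w.1 = 1 := by
  rw [monomial_mul_monomial, monomial_mul_monomial, smul_monomial, add_comm w] at h
  have hcoeff := Finsupp.single_injective _ h
  have htwist : twist u v w = u * twist u w v :=
    mul_right_cancel₀ (mul_ne_zero hr hs) (by linear_combination hcoeff)
  have hpow : u ^ (v.1 * w.2 - v.2 * w.1 - 1) = 1 := by
    rw [show v.1 * w.2 - v.2 * w.1 - 1 = -(v.2 * w.1) - (1 + -(w.2 * v.1)) by ring, zpow_sub,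
      zpow_add, zpow_one, mul_inv_eq_one]
    exact Units.ext htwist
  by_contra hne
  exact hu (isOfFinOrder_iff_zpow_eq_one.mpr ⟨_, sub_ne_zero.mpr hne, hpow⟩)

end QTModel

namespace QTorus

variable {q : ℂ}

theorem QTx_mul_QTy : (QTx q : QTorus q) * QTy q = q • ((QTy q : QTorus q) * QTx q) := by
  have h := RingQuot.mkAlgHom_rel ℂ (QTRel.comm (q := q))
  rwa [map_mul, map_smul, map_mul] at h

theorem subsingleton_zero : Subsingleton (QTorus 0) := by
  have h := (QTx 0 * QTy 0 : (QTorus 0)ˣ).isUnit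
  rw [Units.val_mul, QTx_mul_QTy, zero_smul, isUnit_zero_iff] at h
  exact subsingleton_of_zero_eq_one h

theorem algHom_ext {A : Type*} [Semiring A] [Algebra ℂ A] {F G : QTorus q →ₐ[ℂ] A}
    (hx : F (QTx q) = G (QTx q)) (hy : F (QTy q) = G (QTy q)) : F = G := by
  have hinv : ∀ w : (QTorus q)ˣ, F w = G w → F ↑w⁻¹ = G ↑w⁻¹ := fun w hw ↦
    left_inv_eq_right_inv (by rw [← map_mul, w.inv_mul, map_one])
      (by rw [hw, ← map_mul, w.mul_inv, map_one])
  apply RingQuot.ringQuot_ext'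
  apply FreeAlgebra.hom_ext
  funext i
  fin_cases i
  exacts [hx, hinv _ hx, hy, hinv _ hy]

def monomial (q : ℂ) (v : ℤ × ℤ) : (QTorus q)ˣ := QTx q ^ v.1 * QTy q ^ v.2

theorem monomial_zero : monomial q 0 = 1 := by
  simp [monomial]

theorem monomial_mul_monomial (u : ℂˣ) (v w : ℤ × ℤ) :
    (monomial u v : QTorus u) * monomial u w = twist u v w • (monomial u (v + w) : QTorus u) := by
  let s : (QTorus u)ˣ := Units.map (algebraMap ℂ (QTorus u)).toMonoidHom u
  have hs : ∀ g, Commute s g := fun g ↦ Units.ext (Algebra.commutes _ _)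
  have hxy : QTx u * QTy u = s * (QTy u * QTx u) := by
    ext
    simp only [Units.val_mul, QTx_mul_QTy, Algebra.smul_def]
    rfl
  have key : monomial u v * monomial u w = s ^ (-(v.2 * w.1)) * monomial u (v + w) := by
    calc monomial u v * monomial u w
        = QTx u ^ v.1 * (QTy u ^ v.2 * QTx u ^ w.1) * QTy u ^ w.2 := by
          simp only [monomial, mul_assoc]
      _ = QTx u ^ v.1 * s ^ (-(v.2 * w.1)) * (QTx u ^ w.1 * QTy u ^ v.2) * QTy u ^ w.2 := by
        rw [zpow_mul_zpow_eq_of_mul_eq (hs _) (hs _) hxy, mul_comm w.1]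
        group
      _ = s ^ (-(v.2 * w.1)) * monomial u (v + w) := by
        rw [← ((hs _).zpow_left _).eq, monomial, Prod.fst_add, Prod.snd_add, zpow_add, zpow_add]
        group
  rw [← Units.val_mul, key, Units.val_mul, Algebra.smul_def, twist, ← map_zpow]
  rfl

variable (u : ℂˣ)

def toModel : QTorus u →ₐ[ℂ] QTModel u :=
  RingQuot.liftAlgHom ℂ ⟨FreeAlgebra.lift ℂ
    ![.monomial (1, 0) 1, .monomial (-1, 0) 1, .monomial (0, 1) 1, .monomial (0, -1) 1], by
      rintro _ _ ⟨⟩ <;> simp [QTModel.monomial_mul_monomial, QTModel.smul_monomial,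
        QTModel.one_def, twist, Prod.mk_zero_zero]⟩

def fromModel : QTModel u →ₐ[ℂ] QTorus u :=
  AlgHom.ofLinearMap (linearCombination ℂ fun v ↦ (monomial u v : QTorus u))
    ((linearCombination_single ℂ 1 0).trans (by rw [one_smul, monomial_zero, Units.val_one]))
    (linearCombination_twistedMul (monomial_mul_monomial u))

variable {u}

theorem fromModel_monomial (v : ℤ × ℤ) (c : ℂ) :
    fromModel u (.monomial v c) = c • (monomial u v : QTorus u) :=
  linearCombination_single ℂ c v

theorem toModel_QTx : toModel u (QTx u) = .monomial (1, 0) 1 := by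
  show toModel u (RingQuot.mkAlgHom ℂ _ (FreeAlgebra.ι ℂ 0)) = _
  rw [toModel, RingQuot.liftAlgHom_mkAlgHom_apply, FreeAlgebra.lift_ι_apply]
  rfl

theorem toModel_QTy : toModel u (QTy u) = .monomial (0, 1) 1 := by
  show toModel u (RingQuot.mkAlgHom ℂ _ (FreeAlgebra.ι ℂ 2)) = _
  rw [toModel, RingQuot.liftAlgHom_mkAlgHom_apply, FreeAlgebra.lift_ι_apply]
  rfl

theorem fromModel_toModel (z : QTorus u) : fromModel u (toModel u z) = z := by
  suffices (fromModel u).comp (toModel u) = AlgHom.id ℂ _ from AlgHom.congr_fun this z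
  apply algHom_ext <;> simp [toModel_QTx, toModel_QTy, fromModel_monomial, monomial]

end QTorus

end

/-- For `q` not a root of unity, every algebra automorphism `σ` of the quantum torus
`B = ℂ⟨x^{±1}, y^{±1}⟩/(xy = q·yx)` maps `x` to `λ·xᵃyᵇ` and `y` to `μ·xᶜyᵈ` for some
scalars `λ, μ ∈ ℂˣ` and integers `a, b, c, d` with `ad - bc = 1`. -/
theorem quantum_torus_automorphisms (q : ℂ) (hq : ∀ n : ℕ, 0 < n → q ^ n ≠ 1)
    (σ : QTorus q ≃ₐ[ℂ] QTorus q) :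
    ∃ (lam mu : ℂˣ) (a b c d : ℤ), a * d - b * c = 1 ∧
      σ (QTx q : QTorus q) = (lam : ℂ) • (((QTx q) ^ a * (QTy q) ^ b : (QTorus q)ˣ) : QTorus q) ∧
      σ (QTy q : QTorus q) = (mu : ℂ) • (((QTx q) ^ c * (QTy q) ^ d : (QTorus q)ˣ) : QTorus q) := by
  rcases eq_or_ne q 0 with rfl | hq₀
  · have := QTorus.subsingleton_zero
    exact ⟨1, 1, 1, 0, 0, 1, by norm_num, Subsingleton.elim _ _, Subsingleton.elim _ _⟩
  obtain ⟨u, rfl⟩ : ∃ u : ℂˣ, (u : ℂ) = q := ⟨Units.mk0 q hq₀, rfl⟩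
  have hu : ¬IsOfFinOrder u := fun h ↦ by
    obtain ⟨n, hn, hun⟩ := isOfFinOrder_iff_pow_eq_one.mp (Units.isOfFinOrder_val.mpr h)
    exact hq n hn hun
  obtain ⟨v, r, hr, hx⟩ :=
    QTModel.exists_eq_monomial_of_isUnit (((QTx u).isUnit.map σ).map (QTorus.toModel u))
  obtain ⟨w, s, hs, hy⟩ :=
    QTModel.exists_eq_monomial_of_isUnit (((QTy u).isUnit.map σ).map (QTorus.toModel u))
  refine ⟨Units.mk0 r hr, Units.mk0 s hs, v.1, v.2, w.1, w.2,
    QTModel.det_eq_one_of_monomial_commutation hu hr hs ?_, ?_, ?_⟩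
  · simpa only [map_mul, map_smul, hx, hy] using
      congrArg (fun z ↦ QTorus.toModel u (σ z)) QTorus.QTx_mul_QTy
  · rw [← QTorus.fromModel_toModel (σ _), hx, QTorus.fromModel_monomial]
    rfl
  · rw [← QTorus.fromModel_toModel (σ _), hy, QTorus.fromModel_monomial]
    rfl
end
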